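/- arXiv:0707.1449 — 3 statements merged into one kernel-verified Lean document; each statement's English description precedes it below -/
import Mathlib

section
/- In a model category, every pushout of a weak equivalence between cofibrant objects along a cofibration is a weak equivalence. -/
open CategoryTheory CategoryTheory.Limits

universe v v' u u'

/-- A weak factorization system `(L, R)`. -/
structure WFS {M : Type u} [Category.{v} M] (L R : MorphismProperty M) : Prop where
  left_iff : ∀ {A B : M} (i : A ⟶ B),
    L i ↔ ∀ ⦃X Y : M⦄ (p : X ⟶ Y), R p → HasLiftingProperty i p
  right_iff : ∀ {X Y : M} (p : X ⟶ Y),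
    R p ↔ ∀ ⦃A B : M⦄ (i : A ⟶ B), L i → HasLiftingProperty i p
  factor : ∀ {X Y : M} (f : X ⟶ Y),
    ∃ (Z : M) (l : X ⟶ Z) (r : Z ⟶ Y), L l ∧ R r ∧ l ≫ r = f

/-- A model structure on a (complete and cocomplete) category `M`: classes of
cofibrations, fibrations and weak equivalences such that the weak equivalences are
closed under retracts and satisfy 2-out-of-3, and `(Cof ∩ W, Fib)` and
`(Cof, Fib ∩ W)` are functorial weak factorization systems. -/
structure ModelStructure (M : Type u) [Category.{v} M] where
  Cof : MorphismProperty M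
  Fib : MorphismProperty M
  W : MorphismProperty M
  w_retract : ∀ {A B A' B' : M} (f : A ⟶ B) (g : A' ⟶ B')
    (s : Arrow.mk f ⟶ Arrow.mk g) (r : Arrow.mk g ⟶ Arrow.mk f),
    s ≫ r = 𝟙 (Arrow.mk f) → W g → W f
  w_comp : ∀ {X Y Z : M} (f : X ⟶ Y) (g : Y ⟶ Z), W f → W g → W (f ≫ g)
  w_cancel_left : ∀ {X Y Z : M} (f : X ⟶ Y) (g : Y ⟶ Z), W f → W (f ≫ g) → W g
  w_cancel_right : ∀ {X Y Z : M} (f : X ⟶ Y) (g : Y ⟶ Z), W g → W (f ≫ g) → W f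
  wfs_trivCof_fib : WFS (fun _ _ f => Cof f ∧ W f) Fib
  wfs_cof_trivFib : WFS Cof (fun _ _ f => Fib f ∧ W f)
  functorial_fact₁ :
    MorphismProperty.HasFunctorialFactorization (fun _ _ f => Cof f ∧ W f) Fib
  functorial_fact₂ :
    MorphismProperty.HasFunctorialFactorization Cof (fun _ _ f => Fib f ∧ W f)

/-- An object is cofibrant if the morphism from the initial object is a cofibration. -/
def ModelStructure.Cofibrant {M : Type u} [Category.{v} M] [HasInitial M]
    (S : ModelStructure M) (X : M) : Prop :=
  S.Cof (initial.to X)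

/-- An object is fibrant if the morphism to the terminal object is a fibration. -/
def ModelStructure.Fibrant {M : Type u} [Category.{v} M] [HasTerminal M]
    (S : ModelStructure M) (X : M) : Prop :=
  S.Fib (terminal.from X)

section KenBrown

variable {M : Type u} [Category.{v} M] {L R : MorphismProperty M}

theorem WFS.llp_comp (wfs : WFS L R) {X Y Z : M} {f : X ⟶ Y} {g : Y ⟶ Z}
    (hf : L f) (hg : L g) : L (f ≫ g) := by
  rw [wfs.left_iff]
  intro U V p hp
  haveI := (wfs.left_iff f).mp hf p hp
  haveI := (wfs.left_iff g).mp hg p hp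
  infer_instance

theorem WFS.llp_pushout (wfs : WFS L R) {Z X Y P : M} {f : Z ⟶ X} {g : Z ⟶ Y}
    {h : X ⟶ P} {k : Y ⟶ P} (sq : IsPushout f g h k) (hf : L f) : L k := by
  rw [wfs.left_iff]
  intro U V p hp
  haveI := (wfs.left_iff f).mp hf p hp
  constructor
  intro t b csq
  have csq2 : CommSq (g ≫ t) f p (h ≫ b) := ⟨by
    rw [Category.assoc, csq.w, ← Category.assoc, ← sq.w, Category.assoc]⟩
  refine CommSq.HasLift.mk' ⟨sq.desc csq2.lift t (csq2.fac_left), ?_, ?_⟩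
  · exact sq.inr_desc _ _ _
  · apply sq.hom_ext
    · rw [← Category.assoc, sq.inl_desc, csq2.fac_right]
    · rw [← Category.assoc, sq.inr_desc, csq.w]

theorem WFS.llp_id (wfs : WFS L R) (X : M) : L (𝟙 X) := by
  rw [wfs.left_iff]; intro U V p hp; infer_instance

end KenBrown

theorem ModelStructure.W_id {M : Type u} [Category.{v} M] (S : ModelStructure M) (X : M) :
    S.W (𝟙 X) :=
  (S.wfs_trivCof_fib.llp_id X).2

/-- Key lemma: a "Ken Brown" argument for maps of spans. -/
theorem ModelStructure.push_weq {M : Type u} [Category.{v} M] [HasColimits M]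
    (S : ModelStructure M)
    {X₀ X₁ X₂ W₀ W₁ W₂ Q : M}
    (f : X₀ ⟶ X₁) (g : X₀ ⟶ X₂)
    (θ₀ : X₀ ⟶ W₀) (θ₁ : X₁ ⟶ W₁) (θ₂ : X₂ ⟶ W₂)
    (fm : W₀ ⟶ W₁) (gm : W₀ ⟶ W₂)
    (natf : f ≫ θ₁ = θ₀ ≫ fm) (natg : g ≫ θ₂ = θ₀ ≫ gm)
    {qb : X₂ ⟶ Q} {qa : X₁ ⟶ Q} (Qsq : IsPushout g f qb qa)
    (hθ₂ : S.Cof θ₂ ∧ S.W θ₂)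
    (hl : S.Cof (pushout.desc θ₁ fm natf) ∧ S.W (pushout.desc θ₁ fm natf))
    (compat : g ≫ (θ₂ ≫ pushout.inr fm gm) = f ≫ (θ₁ ≫ pushout.inl fm gm)) :
    S.W (Qsq.desc (θ₂ ≫ pushout.inr fm gm) (θ₁ ≫ pushout.inl fm gm) compat) := by
  have Rsq : IsPushout θ₂ qb (pushout.inl θ₂ qb) (pushout.inr θ₂ qb) :=
    IsPushout.of_hasPushout θ₂ qb
  have hχ₁ : S.Cof (pushout.inr θ₂ qb) ∧ S.W (pushout.inr θ₂ qb) :=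
    S.wfs_trivCof_fib.llp_pushout Rsq hθ₂
  have hqbG : qb ≫ Qsq.desc (θ₂ ≫ pushout.inr fm gm) (θ₁ ≫ pushout.inl fm gm) compat
      = θ₂ ≫ pushout.inr fm gm := Qsq.inl_desc _ _ _
  have wν : f ≫ (qa ≫ pushout.inr θ₂ qb) = θ₀ ≫ (gm ≫ pushout.inl θ₂ qb) := by
    rw [← Category.assoc, ← Qsq.w, Category.assoc, ← pushout.condition,
      ← Category.assoc, natg, Category.assoc]
  have hχ₂W : S.Cof (pushout.desc (pushout.inr fm gm)
        (Qsq.desc (θ₂ ≫ pushout.inr fm gm) (θ₁ ≫ pushout.inl fm gm) compat) hqbG.symm)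
      ∧ S.W (pushout.desc (pushout.inr fm gm)
        (Qsq.desc (θ₂ ≫ pushout.inr fm gm) (θ₁ ≫ pushout.inl fm gm) compat) hqbG.symm) := by
    rw [S.wfs_trivCof_fib.left_iff]
    intro X Y p hp
    haveI := (S.wfs_trivCof_fib.left_iff (pushout.desc θ₁ fm natf)).mp hl p hp
    constructor
    intro t b csq
    have csq2 : CommSq (pushout.desc (qa ≫ pushout.inr θ₂ qb) (gm ≫ pushout.inl θ₂ qb) wν ≫ t)
        (pushout.desc θ₁ fm natf) p (pushout.inl fm gm ≫ b) := ⟨by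
      apply pushout.hom_ext <;>
        simp only [Category.assoc, pushout.inl_desc_assoc, pushout.inr_desc_assoc,
          pushout.inl_desc, pushout.inr_desc, csq.w, pushout.condition_assoc,
          pushout.condition, IsPushout.inr_desc, IsPushout.inr_desc_assoc]⟩
    have hfmx : fm ≫ csq2.lift = gm ≫ (pushout.inl θ₂ qb ≫ t) := by
      have h1 : (pushout.inr f θ₀ ≫ pushout.desc θ₁ fm natf) ≫ csq2.lift
          = pushout.inr f θ₀ ≫ (pushout.desc (qa ≫ pushout.inr θ₂ qb)
              (gm ≫ pushout.inl θ₂ qb) wν ≫ t) := by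
        rw [Category.assoc, csq2.fac_left]
      simpa only [pushout.inr_desc, Category.assoc, pushout.inr_desc_assoc] using h1
    refine CommSq.HasLift.mk' ⟨pushout.desc csq2.lift (pushout.inl θ₂ qb ≫ t) hfmx, ?_, ?_⟩
    · apply pushout.hom_ext
      · simp only [Category.assoc, pushout.inl_desc_assoc, pushout.inl_desc,
          pushout.inr_desc]
      · simp only [Category.assoc, pushout.inr_desc_assoc]
        apply Qsq.hom_ext
        · simp only [IsPushout.inl_desc_assoc, Category.assoc, pushout.inr_desc,
            ← pushout.condition_assoc]
        · have h2 : (pushout.inl f θ₀ ≫ pushout.desc θ₁ fm natf) ≫ csq2.lift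
              = pushout.inl f θ₀ ≫ (pushout.desc (qa ≫ pushout.inr θ₂ qb)
                  (gm ≫ pushout.inl θ₂ qb) wν ≫ t) := by
            rw [Category.assoc, csq2.fac_left]
          simp only [pushout.inl_desc, Category.assoc, pushout.inl_desc_assoc] at h2
          simp only [IsPushout.inr_desc_assoc, Category.assoc, pushout.inl_desc, h2]
    · apply pushout.hom_ext
      · simp only [pushout.inl_desc_assoc, csq2.fac_right]
      · have h3 : pushout.inl θ₂ qb ≫ t ≫ p = pushout.inl θ₂ qb ≫
            pushout.desc (pushout.inr fm gm) (Qsq.desc (θ₂ ≫ pushout.inr fm gm)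
              (θ₁ ≫ pushout.inl fm gm) compat) hqbG.symm ≫ b := by rw [csq.w]
        simp only [pushout.inl_desc_assoc] at h3
        simp only [pushout.inr_desc_assoc, Category.assoc, h3]
  have key : Qsq.desc (θ₂ ≫ pushout.inr fm gm) (θ₁ ≫ pushout.inl fm gm) compat
      = pushout.inr θ₂ qb ≫ pushout.desc (pushout.inr fm gm)
          (Qsq.desc (θ₂ ≫ pushout.inr fm gm) (θ₁ ≫ pushout.inl fm gm) compat) hqbG.symm := by
    rw [pushout.inr_desc]
  rw [key]
  exact S.w_comp _ _ hχ₁.2 hχ₂W.2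


/-- In a model category, every pushout of a weak equivalence between cofibrant objects
along a cofibration is a weak equivalence. -/
theorem pushout_weq_along_cof {M : Type u} [Category.{v} M]
    [HasLimits M] [HasColimits M] [HasInitial M]
    (S : ModelStructure M)
    {A B A' B' : M} (w : A ⟶ A') (i : A ⟶ B) (i' : A' ⟶ B') (w' : B ⟶ B')
    (sq : IsPushout w i i' w')
    (hw : S.W w) (hA : S.Cofibrant A) (hA' : S.Cofibrant A') (hi : S.Cof i) :
    S.W w' := by
  -- coproduct inclusions with cofibrant complement are cofibrations
  have hinl : ∀ (X Y : M), S.Cof (initial.to Y) → S.Cof (coprod.inl : X ⟶ X ⨿ Y) :=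
    fun X Y hY =>
      S.wfs_cof_trivFib.llp_pushout (IsPushout.of_hasBinaryCoproduct' X Y).flip hY
  have hinr : ∀ (X Y : M), S.Cof (initial.to X) → S.Cof (coprod.inr : Y ⟶ X ⨿ Y) :=
    fun X Y hX =>
      S.wfs_cof_trivFib.llp_pushout (IsPushout.of_hasBinaryCoproduct' X Y) hX
  -- factorizations
  obtain ⟨W₀, c₀, ψ₀, hc₀, hψ₀, hfac₀⟩ :=
    S.wfs_cof_trivFib.factor (coprod.desc (𝟙 A) (𝟙 A) : A ⨿ A ⟶ A)
  obtain ⟨W₂, c₂, ψ₂, hc₂, hψ₂, hfac₂⟩ :=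
    S.wfs_cof_trivFib.factor (coprod.desc w (𝟙 A') : A ⨿ A' ⟶ A')
  have hθv : coprod.map i i ≫ coprod.desc (𝟙 B) (𝟙 B) = c₀ ≫ (ψ₀ ≫ i) := by
    rw [← Category.assoc, hfac₀]
    apply coprod.hom_ext <;> simp
  obtain ⟨W₁, c₁, ψ₁, hc₁, hψ₁, hfac₁⟩ :=
    S.wfs_cof_trivFib.factor
      (pushout.desc (coprod.desc (𝟙 B) (𝟙 B)) (ψ₀ ≫ i) hθv :
        pushout (coprod.map i i) c₀ ⟶ B)
  -- the lift `gm : W₀ ⟶ W₂`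
  haveI := (S.wfs_cof_trivFib.left_iff c₀).mp hc₀ ψ₂ hψ₂
  have sqg : CommSq (coprod.map (𝟙 A) w ≫ c₂) c₀ ψ₂ (ψ₀ ≫ w) := ⟨by
    rw [Category.assoc, hfac₂, ← Category.assoc, hfac₀]
    apply coprod.hom_ext <;> simp⟩
  -- naturality equations
  have natfD : i ≫ (coprod.inl ≫ pushout.inl (coprod.map i i) c₀ ≫ c₁)
      = (coprod.inl ≫ c₀) ≫ (pushout.inr (coprod.map i i) c₀ ≫ c₁) := by
    simp only [Category.assoc]
    rw [reassoc_of% (coprod.inl_map i i).symm, pushout.condition_assoc]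
  have natfE : i ≫ (coprod.inr ≫ pushout.inl (coprod.map i i) c₀ ≫ c₁)
      = (coprod.inr ≫ c₀) ≫ (pushout.inr (coprod.map i i) c₀ ≫ c₁) := by
    simp only [Category.assoc]
    rw [reassoc_of% (coprod.inr_map i i).symm, pushout.condition_assoc]
  have natgD : 𝟙 A ≫ (coprod.inl ≫ c₂) = (coprod.inl ≫ c₀) ≫ sqg.lift := by
    simp [sqg.fac_left]
  have natgE : w ≫ (coprod.inr ≫ c₂) = (coprod.inr ≫ c₀) ≫ sqg.lift := by
    simp [sqg.fac_left]
  -- retraction equations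
  have hD₀ψ : (coprod.inl ≫ c₀) ≫ ψ₀ = 𝟙 A := by
    rw [Category.assoc, hfac₀, coprod.inl_desc]
  have hE₀ψ : (coprod.inr ≫ c₀) ≫ ψ₀ = 𝟙 A := by
    rw [Category.assoc, hfac₀, coprod.inr_desc]
  have hD₂ψ : (coprod.inl ≫ c₂) ≫ ψ₂ = w := by
    rw [Category.assoc, hfac₂, coprod.inl_desc]
  have hE₂ψ : (coprod.inr ≫ c₂) ≫ ψ₂ = 𝟙 A' := by
    rw [Category.assoc, hfac₂, coprod.inr_desc]
  have hD₁ψ : (coprod.inl ≫ pushout.inl (coprod.map i i) c₀ ≫ c₁) ≫ ψ₁ = 𝟙 B := by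
    simp only [Category.assoc]
    rw [hfac₁, pushout.inl_desc, coprod.inl_desc]
  have hE₁ψ : (coprod.inr ≫ pushout.inl (coprod.map i i) c₀ ≫ c₁) ≫ ψ₁ = 𝟙 B := by
    simp only [Category.assoc]
    rw [hfac₁, pushout.inl_desc, coprod.inr_desc]
  -- weak equivalence facts
  have WD₀ : S.W (coprod.inl ≫ c₀) :=
    S.w_cancel_right _ ψ₀ hψ₀.2 (by rw [hD₀ψ]; exact S.W_id A)
  have WE₀ : S.W (coprod.inr ≫ c₀) :=
    S.w_cancel_right _ ψ₀ hψ₀.2 (by rw [hE₀ψ]; exact S.W_id A)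
  have WD₂ : S.W (coprod.inl ≫ c₂) :=
    S.w_cancel_right _ ψ₂ hψ₂.2 (by rw [hD₂ψ]; exact hw)
  have WE₂ : S.W (coprod.inr ≫ c₂) :=
    S.w_cancel_right _ ψ₂ hψ₂.2 (by rw [hE₂ψ]; exact S.W_id A')
  have WD₁ : S.W (coprod.inl ≫ pushout.inl (coprod.map i i) c₀ ≫ c₁) :=
    S.w_cancel_right _ ψ₁ hψ₁.2 (by rw [hD₁ψ]; exact S.W_id B)
  have WE₁ : S.W (coprod.inr ≫ pushout.inl (coprod.map i i) c₀ ≫ c₁) :=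
    S.w_cancel_right _ ψ₁ hψ₁.2 (by rw [hE₁ψ]; exact S.W_id B)
  -- cofibration facts
  have CofD₀ : S.Cof (coprod.inl ≫ c₀) := S.wfs_cof_trivFib.llp_comp (hinl A A hA) hc₀
  have CofE₀ : S.Cof (coprod.inr ≫ c₀) := S.wfs_cof_trivFib.llp_comp (hinr A A hA) hc₀
  have CofD₂ : S.Cof (coprod.inl ≫ c₂) := S.wfs_cof_trivFib.llp_comp (hinl A A' hA') hc₂
  have CofE₂ : S.Cof (coprod.inr ≫ c₂) := S.wfs_cof_trivFib.llp_comp (hinr A A' hA) hc₂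
  -- the comparison maps `n_D`, `n_E` into `V` are cofibrations
  have wnD : i ≫ (coprod.inl ≫ pushout.inl (coprod.map i i) c₀)
      = (coprod.inl ≫ c₀) ≫ pushout.inr (coprod.map i i) c₀ := by
    simp only [Category.assoc]
    rw [reassoc_of% (coprod.inl_map i i).symm, pushout.condition]
  have wnE : i ≫ (coprod.inr ≫ pushout.inl (coprod.map i i) c₀)
      = (coprod.inr ≫ c₀) ≫ pushout.inr (coprod.map i i) c₀ := by
    simp only [Category.assoc]
    rw [reassoc_of% (coprod.inr_map i i).symm, pushout.condition]
  have hnD : S.Cof (pushout.desc (coprod.inl ≫ pushout.inl (coprod.map i i) c₀)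
      (pushout.inr (coprod.map i i) c₀) wnD) := by
    rw [S.wfs_cof_trivFib.left_iff]
    intro X Y p hp
    haveI := (S.wfs_cof_trivFib.left_iff i).mp hi p hp
    constructor
    intro t b csq
    have csqr : CommSq ((coprod.inr ≫ c₀) ≫ pushout.inr i (coprod.inl ≫ c₀) ≫ t) i p
        (coprod.inr ≫ pushout.inl (coprod.map i i) c₀ ≫ b) := ⟨by
      simp only [Category.assoc, csq.w, pushout.inr_desc_assoc]
      rw [← pushout.condition_assoc, reassoc_of% (coprod.inr_map i i)]⟩
    obtain ⟨lif, hfl, hfr⟩ : ∃ l : B ⟶ X,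
        i ≫ l = (coprod.inr ≫ c₀) ≫ pushout.inr i (coprod.inl ≫ c₀) ≫ t ∧
        l ≫ p = coprod.inr ≫ pushout.inl (coprod.map i i) c₀ ≫ b :=
      ⟨csqr.lift, csqr.fac_left, csqr.fac_right⟩
    have hx : coprod.map i i ≫ coprod.desc (pushout.inl i (coprod.inl ≫ c₀) ≫ t) lif
        = c₀ ≫ (pushout.inr i (coprod.inl ≫ c₀) ≫ t) := by
      apply coprod.hom_ext
      · try simp only [Category.assoc]
        rw [reassoc_of% (coprod.inl_map i i), coprod.inl_desc, pushout.condition_assoc,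
          Category.assoc]
      · rw [reassoc_of% (coprod.inr_map i i), coprod.inr_desc, hfl]
        simp only [Category.assoc]
    refine CommSq.HasLift.mk'
      ⟨pushout.desc (coprod.desc (pushout.inl i (coprod.inl ≫ c₀) ≫ t) lif)
        (pushout.inr i (coprod.inl ≫ c₀) ≫ t) hx, ?_, ?_⟩
    · apply pushout.hom_ext
      · simp only [Category.assoc, pushout.inl_desc_assoc, pushout.inl_desc,
          coprod.inl_desc]
      · simp only [pushout.inr_desc_assoc, pushout.inr_desc]
    · apply pushout.hom_ext
      · simp only [Category.assoc, pushout.inl_desc_assoc, pushout.inl_desc]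
        apply coprod.hom_ext
        · simp only [coprod.inl_desc_assoc, Category.assoc, csq.w, pushout.inl_desc_assoc]
        · simp only [coprod.inr_desc_assoc, hfr]
      · simp only [Category.assoc, pushout.inr_desc_assoc, csq.w]
  have hnE : S.Cof (pushout.desc (coprod.inr ≫ pushout.inl (coprod.map i i) c₀)
      (pushout.inr (coprod.map i i) c₀) wnE) := by
    rw [S.wfs_cof_trivFib.left_iff]
    intro X Y p hp
    haveI := (S.wfs_cof_trivFib.left_iff i).mp hi p hp
    constructor
    intro t b csq
    have csqr : CommSq ((coprod.inl ≫ c₀) ≫ pushout.inr i (coprod.inr ≫ c₀) ≫ t) i p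
        (coprod.inl ≫ pushout.inl (coprod.map i i) c₀ ≫ b) := ⟨by
      simp only [Category.assoc, csq.w, pushout.inr_desc_assoc]
      rw [← pushout.condition_assoc, reassoc_of% (coprod.inl_map i i)]⟩
    obtain ⟨lif, hfl, hfr⟩ : ∃ l : B ⟶ X,
        i ≫ l = (coprod.inl ≫ c₀) ≫ pushout.inr i (coprod.inr ≫ c₀) ≫ t ∧
        l ≫ p = coprod.inl ≫ pushout.inl (coprod.map i i) c₀ ≫ b :=
      ⟨csqr.lift, csqr.fac_left, csqr.fac_right⟩
    have hx : coprod.map i i ≫ coprod.desc lif (pushout.inl i (coprod.inr ≫ c₀) ≫ t)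
        = c₀ ≫ (pushout.inr i (coprod.inr ≫ c₀) ≫ t) := by
      apply coprod.hom_ext
      · try simp only [Category.assoc]
        rw [reassoc_of% (coprod.inl_map i i), coprod.inl_desc, hfl]
        simp only [Category.assoc]
      · rw [reassoc_of% (coprod.inr_map i i), coprod.inr_desc, pushout.condition_assoc,
          Category.assoc]
    refine CommSq.HasLift.mk'
      ⟨pushout.desc (coprod.desc lif (pushout.inl i (coprod.inr ≫ c₀) ≫ t))
        (pushout.inr i (coprod.inr ≫ c₀) ≫ t) hx, ?_, ?_⟩
    · apply pushout.hom_ext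
      · simp only [Category.assoc, pushout.inl_desc_assoc, pushout.inl_desc,
          coprod.inr_desc]
      · simp only [pushout.inr_desc_assoc, pushout.inr_desc]
    · apply pushout.hom_ext
      · simp only [Category.assoc, pushout.inl_desc_assoc, pushout.inl_desc]
        apply coprod.hom_ext
        · simp only [coprod.inl_desc_assoc, hfr]
        · simp only [coprod.inr_desc_assoc, Category.assoc, csq.w, pushout.inl_desc_assoc]
      · simp only [Category.assoc, pushout.inr_desc_assoc, csq.w]
  -- the relative latching maps are trivial cofibrations
  have hlD : S.Cof (pushout.desc (coprod.inl ≫ pushout.inl (coprod.map i i) c₀ ≫ c₁)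
        (pushout.inr (coprod.map i i) c₀ ≫ c₁) natfD)
      ∧ S.W (pushout.desc (coprod.inl ≫ pushout.inl (coprod.map i i) c₀ ≫ c₁)
        (pushout.inr (coprod.map i i) c₀ ≫ c₁) natfD) := by
    constructor
    · have heq : pushout.desc (coprod.inl ≫ pushout.inl (coprod.map i i) c₀ ≫ c₁)
          (pushout.inr (coprod.map i i) c₀ ≫ c₁) natfD
          = pushout.desc (coprod.inl ≫ pushout.inl (coprod.map i i) c₀)
              (pushout.inr (coprod.map i i) c₀) wnD ≫ c₁ := by
        apply pushout.hom_ext <;>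
          simp only [pushout.inl_desc, pushout.inr_desc, pushout.inl_desc_assoc,
            pushout.inr_desc_assoc, Category.assoc]
      rw [heq]
      exact S.wfs_cof_trivFib.llp_comp hnD hc₁
    · have hinlN : S.Cof (pushout.inl i (coprod.inl ≫ c₀))
          ∧ S.W (pushout.inl i (coprod.inl ≫ c₀)) :=
        S.wfs_trivCof_fib.llp_pushout
          (IsPushout.of_hasPushout i (coprod.inl ≫ c₀)).flip ⟨CofD₀, WD₀⟩
      refine S.w_cancel_left _ _ hinlN.2 ?_
      rw [pushout.inl_desc]
      exact WD₁
  have hlE : S.Cof (pushout.desc (coprod.inr ≫ pushout.inl (coprod.map i i) c₀ ≫ c₁)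
        (pushout.inr (coprod.map i i) c₀ ≫ c₁) natfE)
      ∧ S.W (pushout.desc (coprod.inr ≫ pushout.inl (coprod.map i i) c₀ ≫ c₁)
        (pushout.inr (coprod.map i i) c₀ ≫ c₁) natfE) := by
    constructor
    · have heq : pushout.desc (coprod.inr ≫ pushout.inl (coprod.map i i) c₀ ≫ c₁)
          (pushout.inr (coprod.map i i) c₀ ≫ c₁) natfE
          = pushout.desc (coprod.inr ≫ pushout.inl (coprod.map i i) c₀)
              (pushout.inr (coprod.map i i) c₀) wnE ≫ c₁ := by
        apply pushout.hom_ext <;>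
          simp only [pushout.inl_desc, pushout.inr_desc, pushout.inl_desc_assoc,
            pushout.inr_desc_assoc, Category.assoc]
      rw [heq]
      exact S.wfs_cof_trivFib.llp_comp hnE hc₁
    · have hinlN : S.Cof (pushout.inl i (coprod.inr ≫ c₀))
          ∧ S.W (pushout.inl i (coprod.inr ≫ c₀)) :=
        S.wfs_trivCof_fib.llp_pushout
          (IsPushout.of_hasPushout i (coprod.inr ≫ c₀)).flip ⟨CofE₀, WE₀⟩
      refine S.w_cancel_left _ _ hinlN.2 ?_
      rw [pushout.inl_desc]
      exact WE₁
  -- the two comparison maps into the pushout of the middle span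
  have compatD : 𝟙 A ≫ ((coprod.inl ≫ c₂)
        ≫ pushout.inr (pushout.inr (coprod.map i i) c₀ ≫ c₁) sqg.lift)
      = i ≫ ((coprod.inl ≫ pushout.inl (coprod.map i i) c₀ ≫ c₁)
        ≫ pushout.inl (pushout.inr (coprod.map i i) c₀ ≫ c₁) sqg.lift) := by
    have natgD2 : coprod.inl ≫ c₂ = (coprod.inl ≫ c₀) ≫ sqg.lift :=
      (Category.id_comp _).symm.trans natgD
    simp only [Category.assoc, Category.id_comp]
    rw [reassoc_of% natgD2, ← pushout.condition]
    simp only [Category.assoc]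
    rw [reassoc_of% natfD.symm]
  have compatE : w ≫ ((coprod.inr ≫ c₂)
        ≫ pushout.inr (pushout.inr (coprod.map i i) c₀ ≫ c₁) sqg.lift)
      = i ≫ ((coprod.inr ≫ pushout.inl (coprod.map i i) c₀ ≫ c₁)
        ≫ pushout.inl (pushout.inr (coprod.map i i) c₀ ≫ c₁) sqg.lift) := by
    simp only [Category.assoc]
    rw [reassoc_of% natgE, ← pushout.condition]
    simp only [Category.assoc]
    rw [reassoc_of% natfE.symm]
  have QsqD : IsPushout (𝟙 A) i i (𝟙 B) := IsPushout.of_id_fst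
  have Wκ := S.push_weq i (𝟙 A) (coprod.inl ≫ c₀)
    (coprod.inl ≫ pushout.inl (coprod.map i i) c₀ ≫ c₁) (coprod.inl ≫ c₂)
    (pushout.inr (coprod.map i i) c₀ ≫ c₁) sqg.lift natfD natgD QsqD
    ⟨CofD₂, WD₂⟩ hlD compatD
  have Wε := S.push_weq i w (coprod.inr ≫ c₀)
    (coprod.inr ≫ pushout.inl (coprod.map i i) c₀ ≫ c₁) (coprod.inr ≫ c₂)
    (pushout.inr (coprod.map i i) c₀ ≫ c₁) sqg.lift natfE natgE sq
    ⟨CofE₂, WE₂⟩ hlE compatE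
  -- the map back from the pushout of the middle span to B'
  have compatl : (pushout.inr (coprod.map i i) c₀ ≫ c₁) ≫ (ψ₁ ≫ w')
      = sqg.lift ≫ (ψ₂ ≫ i') := by
    rw [reassoc_of% sqg.fac_right, Category.assoc, reassoc_of% hfac₁,
      pushout.inr_desc_assoc, Category.assoc, ← sq.w]
  -- ε is a section of λ
  have hεsection : sq.desc ((coprod.inr ≫ c₂)
        ≫ pushout.inr (pushout.inr (coprod.map i i) c₀ ≫ c₁) sqg.lift)
      ((coprod.inr ≫ pushout.inl (coprod.map i i) c₀ ≫ c₁)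
        ≫ pushout.inl (pushout.inr (coprod.map i i) c₀ ≫ c₁) sqg.lift) compatE
      ≫ pushout.desc (ψ₁ ≫ w') (ψ₂ ≫ i') compatl = 𝟙 B' := by
    apply sq.hom_ext
    · rw [← Category.assoc, sq.inl_desc, Category.assoc, pushout.inr_desc,
        ← Category.assoc, hE₂ψ, Category.id_comp, Category.comp_id]
    · rw [← Category.assoc, sq.inr_desc, Category.assoc, pushout.inl_desc,
        ← Category.assoc, hE₁ψ, Category.id_comp, Category.comp_id]
  have Wl : S.W (pushout.desc (ψ₁ ≫ w') (ψ₂ ≫ i') compatl) := by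
    refine S.w_cancel_left _ _ Wε ?_
    rw [hεsection]
    exact S.W_id B'
  -- κ followed by λ is w'
  have hκ : QsqD.desc ((coprod.inl ≫ c₂)
        ≫ pushout.inr (pushout.inr (coprod.map i i) c₀ ≫ c₁) sqg.lift)
      ((coprod.inl ≫ pushout.inl (coprod.map i i) c₀ ≫ c₁)
        ≫ pushout.inl (pushout.inr (coprod.map i i) c₀ ≫ c₁) sqg.lift) compatD
      ≫ pushout.desc (ψ₁ ≫ w') (ψ₂ ≫ i') compatl = w' := by
    have h1 := QsqD.inr_desc ((coprod.inl ≫ c₂)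
        ≫ pushout.inr (pushout.inr (coprod.map i i) c₀ ≫ c₁) sqg.lift)
      ((coprod.inl ≫ pushout.inl (coprod.map i i) c₀ ≫ c₁)
        ≫ pushout.inl (pushout.inr (coprod.map i i) c₀ ≫ c₁) sqg.lift) compatD
    rw [Category.id_comp] at h1
    rw [h1, Category.assoc, pushout.inl_desc, ← Category.assoc, hD₁ψ, Category.id_comp]
  have final := S.w_comp _ _ Wκ Wl
  rwa [hκ] at final
end

section
/- In a model category, every pullback of a weak equivalence between fibrant objects along a fibration is a weak equivalence; consequently a model category in which every object is fibrant is right proper. -/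
open CategoryTheory CategoryTheory.Limits

universe v v' u u'

/-! Factor `w` as a trivial cofibration `i : X ⟶ V` followed by a fibration; the fibration is
trivial and trivial fibrations are stable under pullback, so it remains to see that the pullback
`k : P ⟶ E` of `i` along a fibration `ρ : E ⟶ V` is a weak equivalence. Since `X` is fibrant,
`i` has a retraction `r`, and a path object of `V` gives a homotopy `r ≫ i ∼ 𝟙 V` relative
to `X`. Lifting this homotopy through `ρ` (via a path object for `E` lying over that of `V`)
deforms any factorisation `k = kc ≫ kf` (cofibration, trivial fibration) into a map that factors
through `P`, exhibiting `kc` as a retract of a weak equivalence. -/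

namespace WFS

variable {M : Type u} [Category.{v} M] {L R : MorphismProperty M}

lemma right_eq_rlp (h : WFS L R) : R = L.rlp :=
  MorphismProperty.ext _ _ fun _ _ p => h.right_iff p

lemma hasLiftingProperty (h : WFS L R) {A B X Y : M} {i : A ⟶ B} {p : X ⟶ Y}
    (hi : L i) (hp : R p) : HasLiftingProperty i p :=
  (h.left_iff i).1 hi p hp

lemma comp_right (h : WFS L R) {X Y Z : M} {f : X ⟶ Y} {g : Y ⟶ Z} (hf : R f) (hg : R g) :
    R (f ≫ g) := by
  rw [h.right_eq_rlp] at hf hg ⊢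
  exact L.rlp.comp_mem f g hf hg

lemma right_of_isPullback (h : WFS L R) {X Y Y' S : M} {f : X ⟶ S} {g : Y ⟶ S}
    {f' : Y' ⟶ Y} {g' : Y' ⟶ X} (sq : IsPullback f' g' g f) (hg : R g) : R g' := by
  rw [h.right_eq_rlp] at hg ⊢
  exact MorphismProperty.of_isPullback sq hg

end WFS

namespace ModelStructure

variable {M : Type u} [Category.{v} M]

lemma w_id (S : ModelStructure M) (X : M) : S.W (𝟙 X) := by
  obtain ⟨_, l, r, hl, -, hlr⟩ := S.wfs_trivCof_fib.factor (𝟙 X)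
  refine S.w_retract (𝟙 X) l (Arrow.homMk (𝟙 X) l) (Arrow.homMk (𝟙 X) r) ?_ hl.2
  ext <;> simp [hlr]

variable {S : ModelStructure M}

lemma w_right_of_comp_eq_id {X Y : M} {f : X ⟶ Y} {g : Y ⟶ X} (h : f ≫ g = 𝟙 X)
    (hf : S.W f) : S.W g :=
  S.w_cancel_left f g hf (h ▸ S.w_id X)

lemma w_left_of_comp_eq_id {X Y : M} {f : X ⟶ Y} {g : Y ⟶ X} (h : f ≫ g = 𝟙 X)
    (hg : S.W g) : S.W f :=
  S.w_cancel_right f g hg (h ▸ S.w_id X)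

/-- `s` is a retract of the idempotent `t ≫ s`. -/
lemma w_of_w_idempotent {A B : M} {s : A ⟶ B} {t : B ⟶ A} (h : s ≫ t = 𝟙 A)
    (hts : S.W (t ≫ s)) : S.W s := by
  refine S.w_retract s (t ≫ s) (Arrow.homMk s (𝟙 B) (by simp [reassoc_of% h]))
    (Arrow.homMk t (𝟙 B)) ?_ hts
  ext <;> simp [h]

section Fibrant

variable [HasTerminal M]

lemma fibrant_of_fib {Y Z : M} {p : Y ⟶ Z} (hp : S.Fib p) (hZ : S.Fibrant Z) : S.Fibrant Y := by
  rw [Fibrant, ← terminal.comp_from p]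
  exact S.wfs_trivCof_fib.comp_right hp hZ

lemma fib_prod_snd [HasBinaryProducts M] {A : M} (hA : S.Fibrant A) (B : M) :
    S.Fib (prod.snd : A ⨯ B ⟶ B) :=
  S.wfs_trivCof_fib.right_of_isPullback (IsPullback.of_hasBinaryProduct' A B) hA

lemma exists_retraction {X V : M} {i : X ⟶ V} (hi : S.Cof i) (hiW : S.W i) (hX : S.Fibrant X) :
    ∃ r : V ⟶ X, i ≫ r = 𝟙 X := by
  have := S.wfs_trivCof_fib.hasLiftingProperty ⟨hi, hiW⟩ hX
  have sq : CommSq (𝟙 X) i (terminal.from X) (terminal.from V) := ⟨Subsingleton.elim _ _⟩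
  exact ⟨sq.lift, sq.fac_left⟩

end Fibrant

section PathObject

variable [HasBinaryProducts M]

variable (S) in
structure PathObject (V : M) where
  obj : M
  σ : V ⟶ obj
  p : obj ⟶ V ⨯ V
  σ_p : σ ≫ p = diag V
  w_σ : S.W σ
  fib_p : S.Fib p

variable (S) in
lemma PathObject.nonempty (V : M) : Nonempty (S.PathObject V) := by
  obtain ⟨P, σ, p, hσ, hp, hσp⟩ := S.wfs_trivCof_fib.factor (diag V)
  exact ⟨⟨P, σ, p, hσp, hσ.2, hp⟩⟩

namespace PathObject

variable {V : M} (PV : S.PathObject V)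

noncomputable def d₀ : PV.obj ⟶ V := PV.p ≫ prod.fst

noncomputable def d₁ : PV.obj ⟶ V := PV.p ≫ prod.snd

lemma σ_d₀ : PV.σ ≫ PV.d₀ = 𝟙 V := by
  rw [d₀, reassoc_of% PV.σ_p, prod.lift_fst]

lemma σ_d₁ : PV.σ ≫ PV.d₁ = 𝟙 V := by
  rw [d₁, reassoc_of% PV.σ_p, prod.lift_snd]

lemma w_d₁ : S.W PV.d₁ := w_right_of_comp_eq_id PV.σ_d₁ PV.w_σ

lemma fib_d₁ [HasTerminal M] (hV : S.Fibrant V) : S.Fib PV.d₁ :=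
  S.wfs_trivCof_fib.comp_right PV.fib_p (fib_prod_snd hV V)

lemma exists_homotopy_of_retraction {X : M} {i : X ⟶ V} (hi : S.Cof i) (hiW : S.W i)
    {r : V ⟶ X} (hr : i ≫ r = 𝟙 X) :
    ∃ H : V ⟶ PV.obj, i ≫ H = i ≫ PV.σ ∧ H ≫ PV.d₀ = r ≫ i ∧ H ≫ PV.d₁ = 𝟙 V := by
  have := S.wfs_trivCof_fib.hasLiftingProperty ⟨hi, hiW⟩ PV.fib_p
  have sq : CommSq (i ≫ PV.σ) i PV.p (prod.lift (r ≫ i) (𝟙 V)) :=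
    ⟨by ext <;> simp [PV.σ_p, reassoc_of% hr, prod.lift_fst, prod.lift_snd]⟩
  refine ⟨sq.lift, sq.fac_left, ?_, ?_⟩
  · rw [d₀, reassoc_of% sq.fac_right, prod.lift_fst]
  · rw [d₁, reassoc_of% sq.fac_right, prod.lift_snd]

end PathObject

end PathObject

section FibrewisePathObject

variable [HasBinaryProducts M] [HasPullbacks M]

/-- A path object for `E` lying over the path object `PV` along `ρ`: `φ` sends a path in `E`
to its image in `PV.obj` and its endpoint. -/
structure FibrewisePathObject {V E : M} (PV : S.PathObject V) (ρ : E ⟶ V) where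
  obj : M
  σ : E ⟶ obj
  d₀ : obj ⟶ E
  φ : obj ⟶ pullback PV.d₁ ρ
  σ_d₀ : σ ≫ d₀ = 𝟙 E
  σ_φ_fst : σ ≫ φ ≫ pullback.fst _ _ = ρ ≫ PV.σ
  σ_φ_snd : σ ≫ φ ≫ pullback.snd _ _ = 𝟙 E
  d₀_ρ : d₀ ≫ ρ = φ ≫ pullback.fst _ _ ≫ PV.d₀
  w_σ : S.W σ
  fib_φ : S.Fib φ
  w_φ : S.W φ

/-- Factor `E ⟶ (PV.obj ×_V E) ×_V E`, the first factor being fibred over `V` by the source of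
paths; the outer projection is a pullback of `ρ`, which makes `φ` a fibration. -/
lemma FibrewisePathObject.nonempty [HasTerminal M] {V E : M} (hV : S.Fibrant V)
    (PV : S.PathObject V) {ρ : E ⟶ V} (hρ : S.Fib ρ) : Nonempty (FibrewisePathObject PV ρ) := by
  have hsnd : S.Fib (pullback.snd PV.d₁ ρ) ∧ S.W (pullback.snd PV.d₁ ρ) :=
    S.wfs_cof_trivFib.right_of_isPullback (IsPullback.of_hasPullback PV.d₁ ρ)
      ⟨PV.fib_d₁ hV, PV.w_d₁⟩
  let c : E ⟶ pullback PV.d₁ ρ :=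
    pullback.lift (ρ ≫ PV.σ) (𝟙 E) (by rw [Category.assoc, PV.σ_d₁]; simp)
  have hc : S.W c := w_left_of_comp_eq_id (pullback.lift_snd _ _ _) hsnd.2
  let θ : E ⟶ pullback (pullback.fst PV.d₁ ρ ≫ PV.d₀) ρ := pullback.lift c (𝟙 E) (by
    rw [pullback.lift_fst_assoc, Category.assoc, PV.σ_d₀]; simp)
  obtain ⟨P, σ, π, hσ, hπ, hσπ⟩ := S.wfs_trivCof_fib.factor θ
  have hφ : S.W (π ≫ pullback.fst _ _) := S.w_cancel_left σ _ hσ.2 (by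
    rw [reassoc_of% hσπ, pullback.lift_fst]; exact hc)
  refine ⟨⟨P, σ, π ≫ pullback.snd _ _, π ≫ pullback.fst _ _, ?_, ?_, ?_, ?_, hσ.2,
    S.wfs_trivCof_fib.comp_right hπ (S.wfs_trivCof_fib.right_of_isPullback
      (IsPullback.of_hasPullback _ _).flip hρ), hφ⟩⟩
  · rw [reassoc_of% hσπ, pullback.lift_snd]
  · rw [Category.assoc, reassoc_of% hσπ, pullback.lift_fst_assoc, pullback.lift_fst]
  · rw [Category.assoc, reassoc_of% hσπ, pullback.lift_fst_assoc, pullback.lift_snd]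
  · rw [Category.assoc, ← pullback.condition, Category.assoc]

/-- Homotopy lifting extension property of fibrations; `g'` is homotopic to `g`, hence a weak
equivalence. -/
lemma exists_lift_of_homotopy [HasTerminal M] {V E A B : M} (hV : S.Fibrant V)
    (PV : S.PathObject V) {ρ : E ⟶ V} (hρ : S.Fib ρ) {j : A ⟶ B} (hj : S.Cof j) {g : B ⟶ E}
    (hg : S.W g) (h : B ⟶ PV.obj) (hh : h ≫ PV.d₁ = g ≫ ρ)
    (hjh : j ≫ h = j ≫ g ≫ ρ ≫ PV.σ) :
    ∃ g' : B ⟶ E, j ≫ g' = j ≫ g ∧ g' ≫ ρ = h ≫ PV.d₀ ∧ S.W g' := by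
  obtain ⟨PE⟩ := FibrewisePathObject.nonempty hV PV hρ
  have := S.wfs_cof_trivFib.hasLiftingProperty hj ⟨PE.fib_φ, PE.w_φ⟩
  have sq : CommSq (j ≫ g ≫ PE.σ) j PE.φ (pullback.lift h g hh) := ⟨by
    ext
    · simp only [Category.assoc, PE.σ_φ_fst, pullback.lift_fst, hjh]
    · simp only [Category.assoc, PE.σ_φ_snd, pullback.lift_snd, Category.comp_id]⟩
  have hl : sq.lift ≫ PE.φ ≫ pullback.snd _ _ = g := by
    rw [sq.fac_right_assoc, pullback.lift_snd]
  have hd₁ : S.W (PE.φ ≫ pullback.snd _ _) := w_right_of_comp_eq_id PE.σ_φ_snd PE.w_σ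
  refine ⟨sq.lift ≫ PE.d₀, ?_, ?_, ?_⟩
  · rw [sq.fac_left_assoc, Category.assoc, Category.assoc, PE.σ_d₀, Category.comp_id]
  · rw [Category.assoc, PE.d₀_ρ, sq.fac_right_assoc, pullback.lift_fst_assoc]
  · refine S.w_comp _ _ (S.w_cancel_right _ _ hd₁ (by rw [hl]; exact hg)) ?_
    exact w_right_of_comp_eq_id PE.σ_d₀ PE.w_σ

end FibrewisePathObject

section RightProper

variable [HasBinaryProducts M] [HasPullbacks M] [HasTerminal M]

theorem w_of_isPullback_of_trivCof {P X V E : M} {k : P ⟶ E} {u : P ⟶ X} {ρ : E ⟶ V}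
    {i : X ⟶ V} (sq : IsPullback k u ρ i) (hi : S.Cof i) (hiW : S.W i) (hρ : S.Fib ρ)
    (hX : S.Fibrant X) (hV : S.Fibrant V) : S.W k := by
  obtain ⟨r, hr⟩ := exists_retraction hi hiW hX
  obtain ⟨PV⟩ := PathObject.nonempty S V
  obtain ⟨H, hiH, hH₀, hH₁⟩ := PV.exists_homotopy_of_retraction hi hiW hr
  obtain ⟨P₁, kc, kf, hkc, hkf, rfl⟩ := S.wfs_cof_trivFib.factor k
  have hk : kc ≫ kf ≫ ρ = u ≫ i := by simpa using sq.w
  obtain ⟨b, hkcb, hbρ, hb⟩ := exists_lift_of_homotopy hV PV hρ hkc hkf.2 (kf ≫ ρ ≫ H)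
    (by rw [Category.assoc, Category.assoc, hH₁, Category.comp_id])
    (by rw [reassoc_of% hk, reassoc_of% hk, hiH])
  let t : P₁ ⟶ P := sq.lift b (kf ≫ ρ ≫ r) (by rw [hbρ]; simp only [Category.assoc, hH₀])
  have hkct : kc ≫ t = 𝟙 P := sq.hom_ext
    (by rw [Category.assoc, sq.lift_fst, hkcb, Category.id_comp])
    (by rw [Category.assoc, sq.lift_snd, reassoc_of% hk, hr, Category.comp_id, Category.id_comp])
  have htkc : S.W (t ≫ kc) :=
    S.w_cancel_right _ kf hkf.2 (by rw [Category.assoc, sq.lift_fst]; exact hb)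
  exact S.w_comp _ _ (w_of_w_idempotent hkct htkc) hkf.2

theorem w_of_isPullback_of_fibrant {P X Y Z : M} {w' : P ⟶ Y} {u : P ⟶ X} {w : X ⟶ Z}
    {p : Y ⟶ Z} (sq : IsPullback u w' w p) (hw : S.W w) (hX : S.Fibrant X) (hZ : S.Fibrant Z)
    (hp : S.Fib p) : S.W w' := by
  obtain ⟨V, i, q, ⟨hi, hiW⟩, hq, rfl⟩ := S.wfs_trivCof_fib.factor w
  have hqW : S.W q := S.w_cancel_left i q hiW hw
  have hE := (IsPullback.of_hasPullback q p).flip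
  have hk := IsPullback.of_right' sq.flip hE
  rw [← hE.lift_fst w' (u ≫ i) (by rw [sq.flip.w, Category.assoc])]
  refine S.w_comp _ _ (w_of_isPullback_of_trivCof hk hi hiW ?_ hX (fibrant_of_fib hq hZ)) ?_
  · exact S.wfs_trivCof_fib.right_of_isPullback hE hp
  · exact (S.wfs_cof_trivFib.right_of_isPullback hE.flip ⟨hq, hqW⟩).2

end RightProper

end ModelStructure

theorem pullback_weq_along_fib_general {M : Type u} [Category.{v} M]
    [HasLimits M] [HasTerminal M]
    (S : ModelStructure M) :
    (∀ {P X Y Z : M} (w' : P ⟶ Y) (u : P ⟶ X) (w : X ⟶ Z) (p : Y ⟶ Z),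
      IsPullback u w' w p → S.W w → S.Fibrant X → S.Fibrant Z → S.Fib p →
      S.W w') ∧
    ((∀ X : M, S.Fibrant X) →
      ∀ {P X Y Z : M} (w' : P ⟶ Y) (u : P ⟶ X) (w : X ⟶ Z) (p : Y ⟶ Z),
        IsPullback u w' w p → S.W w → S.Fib p → S.W w') :=
  ⟨fun _ _ _ _ sq hw hX hZ hp => S.w_of_isPullback_of_fibrant sq hw hX hZ hp,
    fun hFibrant _ _ _ _ _ _ _ _ sq hw hp =>
      S.w_of_isPullback_of_fibrant sq hw (hFibrant _) (hFibrant _) hp⟩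

/-- In a model category, every pullback of a weak equivalence between fibrant objects
along a fibration is a weak equivalence; consequently a model category in which every
object is fibrant is right proper. -/
theorem pullback_weq_along_fib {M : Type u} [Category.{v} M]
    [HasLimits M] [HasColimits M] [HasTerminal M]
    (S : ModelStructure M) :
    (∀ {P X Y Z : M} (w' : P ⟶ Y) (u : P ⟶ X) (w : X ⟶ Z) (p : Y ⟶ Z),
      IsPullback u w' w p → S.W w → S.Fibrant X → S.Fibrant Z → S.Fib p →
      S.W w') ∧
    ((∀ X : M, S.Fibrant X) →
      ∀ {P X Y Z : M} (w' : P ⟶ Y) (u : P ⟶ X) (w : X ⟶ Z) (p : Y ⟶ Z),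
        IsPullback u w' w p → S.W w → S.Fib p → S.W w') :=
  pullback_weq_along_fib_general S
end

section
/- For an adjunction F ⊣ G between model categories, F is a left Quillen functor if and only if F preserves cofibrations between cofibrant objects and preserves all trivial cofibrations. -/
open CategoryTheory CategoryTheory.Limits

universe v v' u u'

/-- Auxiliary lemma: if every cofibration between cofibrant objects has the left
lifting property against `f`, then `f` is a weak equivalence. -/
theorem dugger_aux {M : Type u} [Category.{v} M] [HasLimits M] [HasInitial M]
    (S : ModelStructure M) {X Y : M} (f : X ⟶ Y)
    (hlift : ∀ ⦃A B : M⦄ (c : A ⟶ B), S.Cofibrant A → S.Cofibrant B → S.Cof c →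
      HasLiftingProperty c f) : S.W f := by
  -- cofibrant replacement of `Y`
  obtain ⟨QY, lY, qY, hlY, hqY, hfY⟩ := S.wfs_cof_trivFib.factor (initial.to Y)
  have hQYcof : S.Cofibrant QY := by
    have h : initial.to QY = lY := initial.hom_ext _ _
    rw [ModelStructure.Cofibrant, h]; exact hlY
  -- the pullback of `f` and `qY`
  have hfst : S.Fib (pullback.fst f qY) ∧ S.W (pullback.fst f qY) := by
    refine (S.wfs_cof_trivFib.right_iff _).mpr ?_
    intro A B i hi
    have hq : HasLiftingProperty i qY := (S.wfs_cof_trivFib.right_iff qY).mp hqY i hi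
    constructor
    intro g h sq
    have sq' : CommSq (g ≫ pullback.snd f qY) i qY (h ≫ f) := ⟨by
      rw [Category.assoc, ← pullback.condition, ← Category.assoc, sq.w, Category.assoc]⟩
    have hm : h ≫ f = sq'.lift ≫ qY := sq'.fac_right.symm
    refine CommSq.HasLift.mk' ⟨pullback.lift h sq'.lift hm, ?_, ?_⟩
    · apply pullback.hom_ext
      · rw [Category.assoc, pullback.lift_fst, sq.w]
      · rw [Category.assoc, pullback.lift_snd, sq'.fac_left]
    · exact pullback.lift_fst _ _ _
  -- cofibrant replacement of the pullback
  obtain ⟨QX, lX, θ, hlX, hθ, hfX⟩ :=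
    S.wfs_cof_trivFib.factor (initial.to (pullback f qY))
  have hQXcof : S.Cofibrant QX := by
    have h : initial.to QX = lX := initial.hom_ext _ _
    rw [ModelStructure.Cofibrant, h]; exact hlX
  have hqXW : S.W (θ ≫ pullback.fst f qY) := S.w_comp _ _ hθ.2 hfst.2
  have hsq : (θ ≫ pullback.fst f qY) ≫ f = (θ ≫ pullback.snd f qY) ≫ qY := by
    rw [Category.assoc, Category.assoc, pullback.condition]
  -- factor `f' = θ ≫ snd` as a cofibration followed by a trivial fibration
  obtain ⟨Z, c, z, hc, hz, hfZ⟩ := S.wfs_cof_trivFib.factor (θ ≫ pullback.snd f qY)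
  have hZcof : S.Cofibrant Z := by
    have hcomp : S.Cof (lX ≫ c) := by
      refine (S.wfs_cof_trivFib.left_iff _).mpr ?_
      intro U V p hp
      haveI := (S.wfs_cof_trivFib.left_iff lX).mp hlX p hp
      haveI := (S.wfs_cof_trivFib.left_iff c).mp hc p hp
      infer_instance
    have h : initial.to Z = lX ≫ c := initial.hom_ext _ _
    rw [ModelStructure.Cofibrant, h]; exact hcomp
  -- lift `l : Z ⟶ X`
  haveI hcf : HasLiftingProperty c f := hlift c hQXcof hZcof hc
  have sq1 : CommSq (θ ≫ pullback.fst f qY) c f (z ≫ qY) := ⟨by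
    rw [hsq, ← hfZ, Category.assoc]⟩
  -- lift `r : Z ⟶ QX`
  haveI hcθ : HasLiftingProperty c θ := (S.wfs_cof_trivFib.left_iff c).mp hc θ hθ
  have hlf : sq1.lift ≫ f = z ≫ qY := sq1.fac_right
  have sq2 : CommSq (𝟙 QX) c θ (pullback.lift sq1.lift z hlf) := ⟨by
    apply pullback.hom_ext
    · rw [Category.assoc, Category.assoc, pullback.lift_fst, Category.id_comp,
        sq1.fac_left]
    · rw [Category.assoc, Category.assoc, pullback.lift_snd, Category.id_comp, hfZ]⟩
  have hrf' : sq2.lift ≫ (θ ≫ pullback.snd f qY) = z := by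
    rw [← Category.assoc, sq2.fac_right, pullback.lift_snd]
  -- `f'` is a retract of the trivial fibration `z`
  have hW' : S.W (θ ≫ pullback.snd f qY) := by
    refine S.w_retract _ z (Arrow.homMk (u := c) (v := 𝟙 QY) ?_)
      (Arrow.homMk (u := sq2.lift) (v := 𝟙 QY) ?_) ?_ hz.2
    · simp [hfZ]
    · simp [hrf']
    · apply CommaMorphism.ext
      · simp [sq2.fac_left]
      · simp
  have hcmp : S.W ((θ ≫ pullback.snd f qY) ≫ qY) := S.w_comp _ _ hW' hqY.2
  rw [← hsq] at hcmp
  exact S.w_cancel_left _ f hqXW hcmp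

/-- Dugger's characterization: for an adjunction `F ⊣ G` between model categories, `F`
is a left Quillen functor (preserves cofibrations and trivial cofibrations) iff `F`
preserves cofibrations between cofibrant objects and all trivial cofibrations. -/
theorem leftQuillen_iff_dugger {M : Type u} {N : Type u'}
    [Category.{v} M] [Category.{v'} N]
    [HasLimits M] [HasColimits M] [HasInitial M] [HasLimits N] [HasColimits N]
    (S : ModelStructure M) (T : ModelStructure N)
    (F : M ⥤ N) (G : N ⥤ M) (adj : F ⊣ G) :
    ((∀ {A B : M} (i : A ⟶ B), S.Cof i → T.Cof (F.map i)) ∧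
     (∀ {A B : M} (i : A ⟶ B), S.Cof i → S.W i → T.Cof (F.map i) ∧ T.W (F.map i)))
    ↔
    ((∀ {A B : M} (i : A ⟶ B), S.Cofibrant A → S.Cofibrant B → S.Cof i →
        T.Cof (F.map i)) ∧
     (∀ {A B : M} (i : A ⟶ B), S.Cof i → S.W i → T.Cof (F.map i) ∧ T.W (F.map i))) := by
  constructor
  · rintro ⟨h1, h2⟩
    exact ⟨fun {A B} i _ _ hi => h1 i hi, h2⟩
  · rintro ⟨h1, h2⟩
    refine ⟨fun {A B} i hi => ?_, h2⟩
    refine (T.wfs_cof_trivFib.left_iff (F.map i)).mpr ?_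
    intro X Y p hp
    rw [adj.hasLiftingProperty_iff]
    have hGpFib : S.Fib (G.map p) := by
      refine (S.wfs_trivCof_fib.right_iff _).mpr ?_
      intro A' B' t ht
      rw [← adj.hasLiftingProperty_iff]
      exact (T.wfs_trivCof_fib.left_iff (F.map t)).mp
        ⟨(h2 t ht.1 ht.2).1, (h2 t ht.1 ht.2).2⟩ p hp.1
    have hGpW : S.W (G.map p) := by
      refine dugger_aux S (G.map p) ?_
      intro A' B' c hA hB hc
      rw [← adj.hasLiftingProperty_iff]
      exact (T.wfs_cof_trivFib.left_iff (F.map c)).mp (h1 c hA hB hc) p hp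
    exact (S.wfs_cof_trivFib.left_iff i).mp hi (G.map p) ⟨hGpFib, hGpW⟩
end
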